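/- arXiv:1301.1038 — 2 statements merged into one kernel-verified Lean document; each statement's English description precedes it below -/
import Mathlib

section
/- Let m, n ≥ 2 and let (S,T) be an irreducible Cuntz-type atomic representation of F_θ^+ on H with standard basis {ξ_t}. Assume the 2-graph is periodic, witnessed at the operator level: there exist integers a,b > 0 and a bijection γ from the set of words of length a over {1,…,m} onto the set of words of length b over {1,…,n} such that S_uT_v = T_{γ(u)}S_{γ^{-1}(v)} for every word u of length a and every word v of length b. Assume moreover that one of the following holds: (type 1) some standard basis vector ξ satisfies S_{u_0}ξ ∈ 𝕋ξ for some nonempty word u_0 and some standard basis vector ξ' satisfies T_{v_0}ξ' ∈ 𝕋ξ' for some nonempty word v_0; or (type 3b(ii)) no standard basis vector ξ admits nonempty words u, v with S_uξ ∈ 𝕋ξ, or T_vξ ∈ 𝕋ξ, or T_vS_uξ ∈ 𝕋ξ, and there exist integers k,l > 0, a standard basis vector ξ_0, words u_0,u_{-1},u_{-2},… each of length k over {1,…,m}, and words v_0,v_{-1},v_{-2},… each of length l over {1,…,n}, such that T_{v_{d+1}}S_{u_d} = S_{u_{d+1}}T_{v_d} for every d ≤ −1 and, for every t ≥ 0,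 the vector T_{v_0v_{-1}⋯v_{-t}}*ξ_0 is a nonzero unimodular scalar multiple of S_{u_0u_{-1}⋯u_{-t}}*ξ_0. Then (S,T) has no wandering vectors. -/
noncomputable section

open scoped InnerProductSpace ComplexInnerProductSpace Classical

section GeneralDefs

variable {E : Type*} [NormedAddCommGroup E] [InnerProductSpace ℂ E]

/-- The operator associated to a word: `wordOp V [a₁, …, a_r] = V a₁ * ⋯ * V a_r`. -/
def wordOp {ι : Type*} (V : ι → E →L[ℂ] E) (w : List ι) : E →L[ℂ] E :=
  (w.map V).prod

/-- The operator associated to a word of fixed length `k` given as a function `Fin k → ι`. -/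
def fnWordOp {ι : Type*} {k : ℕ} (V : ι → E →L[ℂ] E) (u : Fin k → ι) : E →L[ℂ] E :=
  wordOp V (List.ofFn u)

/-- The closure of a set of operators in the weak operator topology, described via
basic WOT-neighbourhoods (finitely many vector functionals). -/
def wotClosure (S : Set (E →L[ℂ] E)) : Set (E →L[ℂ] E) :=
  {A | ∀ ε > (0 : ℝ), ∀ F : Finset (E × E), ∃ B ∈ S, ∀ p ∈ F, ‖⟪p.1, (A - B) p.2⟫‖ < ε}

/-- The unital WOT-closed algebra generated by a set of operators. -/
def genWotAlg (G : Set (E →L[ℂ] E)) : Set (E →L[ℂ] E) :=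
  wotClosure ((Algebra.adjoin ℂ G : Subalgebra ℂ (E →L[ℂ] E)) : Set (E →L[ℂ] E))

/-- A wandering vector for a row-isometry `V = [V_a : a ∈ ι]`: a unit vector whose orbit
under all words in the `V_a` is an orthonormal family. -/
def IsWandering {ι : Type*} (V : ι → E →L[ℂ] E) (ζ : E) : Prop :=
  ‖ζ‖ = 1 ∧ ∀ w w' : List ι,
    ⟪wordOp V w ζ, wordOp V w' ζ⟫ = if w = w' then 1 else 0

/-- Restriction of an operator to an invariant subspace (junk value `0` if not invariant). -/
def restrictCLM (A : E →L[ℂ] E) (M : Submodule ℂ E) : M →L[ℂ] M :=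
  if h : ∀ x ∈ M, A x ∈ M then
    { toFun := fun x => ⟨A x, h x x.2⟩
      map_add' := by intro x y; ext; simp
      map_smul' := by intro c x; ext; simp
      cont := Continuous.subtype_mk (A.continuous.comp continuous_subtype_val) _ }
  else 0

/-- The unital WOT-closed algebra on `M` generated by the restrictions of the `V a` to `M`. -/
def rowAlgOn {ι : Type*} (V : ι → E →L[ℂ] E) (M : Submodule ℂ E) : Set (M →L[ℂ] M) :=
  genWotAlg (Set.range fun a => restrictCLM (V a) M)

/-- The unital WOT-closed algebra on `M` generated by the restrictions of the `V a`
is self-adjoint. -/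
def restrictedAlgSelfAdjoint {ι : Type*} (V : ι → E →L[ℂ] E) (M : Submodule ℂ E) : Prop :=
  ∀ A ∈ rowAlgOn V M, ∃ B ∈ rowAlgOn V M,
    ∀ x y : M, ⟪((A x : M) : E), (y : E)⟫ = ⟪(x : E), ((B y : M) : E)⟫

variable [CompleteSpace E]

/-- A row-isometry is of dilation type if it is defect free and has no nonzero reducing
subspace on which it is either absolutely continuous (spanned by wandering vectors) or
singular (generating a self-adjoint WOT-closed algebra). -/
def IsDilationType {ι : Type*} [Fintype ι] (V : ι → E →L[ℂ] E) : Prop :=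
  (∑ a, V a * star (V a)) = 1 ∧
    ¬ ∃ M : Submodule ℂ E, M ≠ ⊥ ∧ IsClosed (M : Set E) ∧
      (∀ a, ∀ x ∈ M, V a x ∈ M) ∧ (∀ a, ∀ x ∈ M, star (V a) x ∈ M) ∧
      ((M = (Submodule.span ℂ {ζ : E | ζ ∈ M ∧ IsWandering V ζ}).topologicalClosure) ∨
        restrictedAlgSelfAdjoint V M)

end GeneralDefs

/-- An isometric representation of the single-vertex 2-graph `F_θ⁺` on a Hilbert space `H`. -/
structure TwoGraphRep (m n : ℕ) (θ : Equiv.Perm (Fin m × Fin n)) (H : Type*)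
    [NormedAddCommGroup H] [InnerProductSpace ℂ H] [CompleteSpace H] where
  S : Fin m → H →L[ℂ] H
  T : Fin n → H →L[ℂ] H
  isometS : ∀ i i', star (S i) * S i' = if i = i' then 1 else 0
  isometT : ∀ j j', star (T j) * T j' = if j = j' then 1 else 0
  comm : ∀ i j, S i * T j = T (θ (i, j)).2 * S (θ (i, j)).1

namespace TwoGraphRep

variable {m n : ℕ} {θ : Equiv.Perm (Fin m × Fin n)} {H : Type*}
  [NormedAddCommGroup H] [InnerProductSpace ℂ H] [CompleteSpace H]

/-- A representation is of Cuntz type if both row-isometries are defect free. -/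
def CuntzType (ρ : TwoGraphRep m n θ H) : Prop :=
  (∑ i, ρ.S i * star (ρ.S i)) = 1 ∧ (∑ j, ρ.T j * star (ρ.T j)) = 1

/-- The nonself-adjoint 2-graph algebra `𝔖`: the unital WOT-closed algebra generated by
the `S_i` and `T_j`. -/
def alg (ρ : TwoGraphRep m n θ H) : Set (H →L[ℂ] H) :=
  genWotAlg (Set.range ρ.S ∪ Set.range ρ.T)

/-- The von Neumann algebra generated by the `S_i` and `T_j`: the WOT-closure of the
unital *-algebra they generate. -/
def vnAlg (ρ : TwoGraphRep m n θ H) : Set (H →L[ℂ] H) :=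
  genWotAlg ((Set.range ρ.S ∪ Set.range ρ.T) ∪ star '' (Set.range ρ.S ∪ Set.range ρ.T))

/-- Wandering vector for the row-isometry `[S_u T_v : |u| = k, |v| = l]`. -/
def IsWanderingKL (ρ : TwoGraphRep m n θ H) (k l : ℕ) (ζ : H) : Prop :=
  ‖ζ‖ = 1 ∧ ∀ (p p' : ℕ) (u u' : List (Fin m)) (v v' : List (Fin n)),
    u.length = p * k → v.length = p * l → u'.length = p' * k → v'.length = p' * l →
    ⟪(wordOp ρ.S u * wordOp ρ.T v) ζ, (wordOp ρ.S u' * wordOp ρ.T v') ζ⟫ =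
      if u = u' ∧ v = v' then 1 else 0

/-- The range of the structure projection `P_{k,l}`: the orthogonal complement of the
closed linear span of the wandering vectors of `[S_u T_v : |u| = k, |v| = l]`. -/
def structSpaceKL (ρ : TwoGraphRep m n θ H) (k l : ℕ) : Submodule ℂ H :=
  ((Submodule.span ℂ {ζ : H | ρ.IsWanderingKL k l ζ}).topologicalClosure)ᗮ

/-- The range of the first structure projection `P = ⋀_{k,l>0} P_{k,l}`. -/
def firstStructSpace (ρ : TwoGraphRep m n θ H) : Submodule ℂ H :=
  ⨅ (k : ℕ) (l : ℕ) (_ : 0 < k) (_ : 0 < l), ρ.structSpaceKL k l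

/-- The row-isometry `[S_u T_v : |u| = k, |v| = l]`. -/
def rowKL (ρ : TwoGraphRep m n θ H) (k l : ℕ) :
    ((Fin k → Fin m) × (Fin l → Fin n)) → H →L[ℂ] H :=
  fun p => fnWordOp ρ.S p.1 * fnWordOp ρ.T p.2

/-- A wandering vector for the representation `(S,T)`. -/
def IsWanderingRep (ρ : TwoGraphRep m n θ H) (ζ : H) : Prop :=
  ‖ζ‖ = 1 ∧ ∀ (u u' : List (Fin m)) (v v' : List (Fin n)),
    ⟪(wordOp ρ.S u * wordOp ρ.T v) ζ, (wordOp ρ.S u' * wordOp ρ.T v') ζ⟫ =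
      if u = u' ∧ v = v' then 1 else 0

/-- The representation is irreducible: the only closed subspaces invariant under all
`S_i, T_j, S_i*, T_j*` are `⊥` and `⊤`. -/
def Irreducible (ρ : TwoGraphRep m n θ H) : Prop :=
  ∀ M : Submodule ℂ H, IsClosed (M : Set H) →
    (∀ i, ∀ x ∈ M, ρ.S i x ∈ M) → (∀ i, ∀ x ∈ M, star (ρ.S i) x ∈ M) →
    (∀ j, ∀ x ∈ M, ρ.T j x ∈ M) → (∀ j, ∀ x ∈ M, star (ρ.T j) x ∈ M) →
    M = ⊥ ∨ M = ⊤

/-- The representation is atomic with standard basis `ξ`: every generator maps each basis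
vector to a unimodular multiple of a basis vector. -/
def AtomicBasis {Λ : Type*} (ρ : TwoGraphRep m n θ H) (ξ : HilbertBasis Λ ℂ H) : Prop :=
  (∀ i t, ∃ (c : ℂ) (t' : Λ), ‖c‖ = 1 ∧ ρ.S i (ξ t) = c • ξ t') ∧
  (∀ j t, ∃ (c : ℂ) (t' : Λ), ‖c‖ = 1 ∧ ρ.T j (ξ t) = c • ξ t')

/-- `x` has a blue ring: `S_u x ∈ 𝕋x` for some nonempty word `u`. -/
def HasBlueRing (ρ : TwoGraphRep m n θ H) (x : H) : Prop :=
  ∃ u : List (Fin m), u ≠ [] ∧ ∃ c : ℂ, ‖c‖ = 1 ∧ wordOp ρ.S u x = c • x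

/-- `x` has a red ring: `T_v x ∈ 𝕋x` for some nonempty word `v`. -/
def HasRedRing (ρ : TwoGraphRep m n θ H) (x : H) : Prop :=
  ∃ v : List (Fin n), v ≠ [] ∧ ∃ c : ℂ, ‖c‖ = 1 ∧ wordOp ρ.T v x = c • x

/-- `x` has a mixed ring: `T_v S_u x ∈ 𝕋x` for some nonempty words `u`, `v`. -/
def HasMixedRing (ρ : TwoGraphRep m n θ H) (x : H) : Prop :=
  ∃ (u : List (Fin m)) (v : List (Fin n)), u ≠ [] ∧ v ≠ [] ∧
    ∃ c : ℂ, ‖c‖ = 1 ∧ wordOp ρ.T v (wordOp ρ.S u x) = c • x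

end TwoGraphRep

/-! With `W = ∑_{|u| = a} T_{γ u} S_u*`, periodicity gives `W S_u = T_{γ u}` and, one letter at a
time, `S_i T_{γ (w j)} = T_{γ (i w)} S_j`; hence `W` is a unitary commuting with every `S_i` and
`T_j`. In an irreducible representation such a normal operator is a scalar `c` (Schur's lemma, via
the continuous functional calculus), so `T_{γ u} = c S_u`. No wandering vector `ζ` survives this:
`S_u ζ` and `T_{γ u} ζ` would be orthogonal unit vectors. -/

section Words

variable {E : Type*} [NormedAddCommGroup E] [InnerProductSpace ℂ E] {ι κ : Type*}

@[simp]
lemma fnWordOp_zero (V : ι → E →L[ℂ] E) (u : Fin 0 → ι) : fnWordOp V u = 1 := by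
  simp [fnWordOp, wordOp]

lemma fnWordOp_cons {k : ℕ} (V : ι → E →L[ℂ] E) (i : ι) (u : Fin k → ι) :
    fnWordOp V (Fin.cons i u) = V i * fnWordOp V u := by
  simp [fnWordOp, wordOp, List.ofFn_succ]

lemma fnWordOp_snoc {k : ℕ} (V : ι → E →L[ℂ] E) (u : Fin k → ι) (i : ι) :
    fnWordOp V (Fin.snoc u i) = fnWordOp V u * V i := by
  rw [fnWordOp, wordOp, List.ofFn_succ']
  simp [fnWordOp, wordOp]

lemma exists_mul_fnWordOp_eq {S : ι → E →L[ℂ] E} {T : κ → E →L[ℂ] E}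
    (hmove : ∀ i j, ∃ j' i', S i * T j = T j' * S i') {l : ℕ} (v : Fin l → κ) (i : ι) :
    ∃ (v' : Fin l → κ) (i' : ι), S i * fnWordOp T v = fnWordOp T v' * S i' := by
  induction l generalizing i with
  | zero => exact ⟨v, i, by simp⟩
  | succ l ih =>
    obtain ⟨j', i'', h⟩ := hmove i (v 0)
    obtain ⟨v', i', h'⟩ := ih (Fin.tail v) i''
    refine ⟨Fin.cons j' v', i', ?_⟩
    rw [← Fin.cons_self_tail v, fnWordOp_cons, fnWordOp_cons, ← mul_assoc, h, mul_assoc, h',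
      mul_assoc]

variable [CompleteSpace E]

section Orthonormal

variable [DecidableEq ι] {V : ι → E →L[ℂ] E}
  (hV : ∀ i i', star (V i) * V i' = if i = i' then 1 else 0)
include hV

lemma star_fnWordOp_mul_fnWordOp {k : ℕ} (u u' : Fin k → ι) :
    star (fnWordOp V u) * fnWordOp V u' = if u = u' then 1 else 0 := by
  induction k with
  | zero => simp [Subsingleton.elim u u']
  | succ k ih =>
    rw [← Fin.cons_self_tail u, ← Fin.cons_self_tail u', fnWordOp_cons, fnWordOp_cons,
      star_mul]
    simp only [Fin.cons_inj]
    calc star (fnWordOp V (Fin.tail u)) * star (V (u 0)) * (V (u' 0) * fnWordOp V (Fin.tail u'))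
        = star (fnWordOp V (Fin.tail u)) * (star (V (u 0)) * V (u' 0)) *
            fnWordOp V (Fin.tail u') := by noncomm_ring
      _ = _ := by
        rw [hV]
        split_ifs <;> simp_all

lemma fnWordOp_injective [Nontrivial E] {k : ℕ} :
    Function.Injective (fnWordOp V : (Fin k → ι) → E →L[ℂ] E) := by
  intro u u' h
  have h' := star_fnWordOp_mul_fnWordOp hV u u'
  rw [← h, star_fnWordOp_mul_fnWordOp hV u u, if_pos rfl] at h'
  by_contra hne
  rw [if_neg hne] at h'
  exact one_ne_zero h'

lemma fnWordOp_mul_cancel_left {k : ℕ} (u : Fin k → ι) {X Y : E →L[ℂ] E}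
    (h : fnWordOp V u * X = fnWordOp V u * Y) : X = Y := by
  have h' := congrArg (star (fnWordOp V u) * ·) h
  simpa only [← mul_assoc, star_fnWordOp_mul_fnWordOp hV, if_pos, one_mul] using h'

end Orthonormal

lemma fnWordOp_mul_fnWordOp_inj [Nontrivial E] [DecidableEq ι] [DecidableEq κ]
    {S : ι → E →L[ℂ] E} {T : κ → E →L[ℂ] E}
    (hS : ∀ i i', star (S i) * S i' = if i = i' then 1 else 0)
    (hT : ∀ j j', star (T j) * T j' = if j = j' then 1 else 0)
    {k l : ℕ} {x x' : Fin l → κ} {y y' : Fin k → ι}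
    (h : fnWordOp T x * fnWordOp S y = fnWordOp T x' * fnWordOp S y') : x = x' ∧ y = y' := by
  have hx : x = x' := by
    by_contra hne
    have h' := congrArg (star (fnWordOp T x) * ·) h
    simp only [← mul_assoc, star_fnWordOp_mul_fnWordOp hT, if_pos, if_neg hne, one_mul,
      zero_mul] at h'
    have := star_fnWordOp_mul_fnWordOp hS y y
    rw [h', mul_zero, if_pos rfl] at this
    exact zero_ne_one this
  subst hx
  exact ⟨rfl, fnWordOp_injective hS (fnWordOp_mul_cancel_left hT x h)⟩

section Cuntz

variable [Fintype ι] {V : ι → E →L[ℂ] E} (hV : ∑ i, V i * star (V i) = 1)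
include hV

lemma sum_fnWordOp_mul_star (k : ℕ) :
    ∑ u : Fin k → ι, fnWordOp V u * star (fnWordOp V u) = 1 := by
  induction k with
  | zero => simp
  | succ k ih =>
    rw [← (Fin.consEquiv fun _ => ι).sum_comp, Fintype.sum_prod_type]
    calc ∑ i, ∑ u : Fin k → ι, fnWordOp V (Fin.cons i u) * star (fnWordOp V (Fin.cons i u))
        = ∑ i, V i * (∑ u : Fin k → ι, fnWordOp V u * star (fnWordOp V u)) * star (V i) := by
          simp only [fnWordOp_cons, star_mul, Finset.mul_sum, Finset.sum_mul, mul_assoc]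
      _ = 1 := by simpa only [ih, mul_one] using hV

lemma eq_of_forall_mul_fnWordOp_eq (k : ℕ) {X Y : E →L[ℂ] E}
    (h : ∀ u : Fin k → ι, X * fnWordOp V u = Y * fnWordOp V u) : X = Y := by
  calc X = X * ∑ u : Fin k → ι, fnWordOp V u * star (fnWordOp V u) := by
        rw [sum_fnWordOp_mul_star hV, mul_one]
    _ = Y * ∑ u : Fin k → ι, fnWordOp V u * star (fnWordOp V u) := by
        simp only [Finset.mul_sum, ← mul_assoc, h]
    _ = Y := by rw [sum_fnWordOp_mul_star hV, mul_one]

end Cuntz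

end Words

section PeriodOp

variable {E : Type*} [NormedAddCommGroup E] [InnerProductSpace ℂ E] [CompleteSpace E]
  {ι κ : Type*} {S : ι → E →L[ℂ] E} {T : κ → E →L[ℂ] E}

lemma mul_fnWordOp_snoc_eq_fnWordOp_cons_mul [Nontrivial E] [DecidableEq ι] [DecidableEq κ]
    (hS : ∀ i i', star (S i) * S i' = if i = i' then 1 else 0)
    (hT : ∀ j j', star (T j) * T j' = if j = j' then 1 else 0)
    (hmove : ∀ i j, ∃ j' i', S i * T j = T j' * S i')
    {a b : ℕ} {γ : (Fin (a + 1) → ι) ≃ (Fin b → κ)}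
    (hper : ∀ u v, fnWordOp S u * fnWordOp T v = fnWordOp T (γ u) * fnWordOp S (γ.symm v))
    (i : ι) (w : Fin a → ι) (j : ι) :
    S i * fnWordOp T (γ (Fin.snoc w j)) = fnWordOp T (γ (Fin.cons i w)) * S j := by
  -- Writing `S_{i w j} T_z` as `T_? S_?` in two ways and comparing, by unique factorisation.
  have factor : ∀ (i : ι) (z z' : Fin b → κ) (j' : ι) (x : Fin b → κ) (i' : ι),
      S j * fnWordOp T z = fnWordOp T z' * S j' →
      S i * fnWordOp T (γ (Fin.snoc w j)) = fnWordOp T x * S i' →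
      x = γ (Fin.cons i w) ∧ i' = γ.symm z' 0 := by
    intro i z z' j' x i' hz hx
    have h : fnWordOp T x * fnWordOp S (Fin.cons i' (γ.symm z)) =
        fnWordOp T (γ (Fin.cons i w)) * fnWordOp S (Fin.snoc (γ.symm z') j') :=
      calc fnWordOp T x * fnWordOp S (Fin.cons i' (γ.symm z))
          = S i * (fnWordOp S (Fin.snoc w j) * fnWordOp T z) := by
            rw [hper, ← mul_assoc, hx, fnWordOp_cons, mul_assoc]
        _ = fnWordOp S (Fin.cons i w) * (S j * fnWordOp T z) := by
            rw [← mul_assoc, ← fnWordOp_cons, Fin.cons_snoc_eq_snoc_cons, fnWordOp_snoc,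
              mul_assoc]
        _ = fnWordOp T (γ (Fin.cons i w)) * fnWordOp S (Fin.snoc (γ.symm z') j') := by
            rw [hz, ← mul_assoc, hper, mul_assoc, fnWordOp_snoc]
    obtain ⟨hx, hy⟩ := fnWordOp_mul_fnWordOp_inj hS hT h
    exact ⟨hx, by simpa using congrFun hy 0⟩
  obtain ⟨z', j', hz⟩ := exists_mul_fnWordOp_eq hmove (γ (Fin.snoc w j)) j
  -- The case `i = j` of `factor` identifies `z'`, and then the general case identifies `i'`.
  have hz' : z' = γ (Fin.cons j w) := (factor j _ z' j' z' j' hz hz).1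
  obtain ⟨x, i', hx⟩ := exists_mul_fnWordOp_eq hmove (γ (Fin.snoc w j)) i
  obtain ⟨rfl, rfl⟩ := factor i _ z' j' x i' hz hx
  rw [hx, hz', Equiv.symm_apply_apply, Fin.cons_zero]

variable [Fintype ι]

def periodOp (S : ι → E →L[ℂ] E) (T : κ → E →L[ℂ] E) {a b : ℕ}
    (γ : (Fin a → ι) ≃ (Fin b → κ)) : E →L[ℂ] E :=
  ∑ u, fnWordOp T (γ u) * star (fnWordOp S u)

lemma star_periodOp [Fintype κ] {a b : ℕ} (γ : (Fin a → ι) ≃ (Fin b → κ)) :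
    star (periodOp S T γ) = periodOp T S γ.symm := by
  simp only [periodOp, star_sum, star_mul, star_star]
  rw [← γ.sum_comp]
  simp only [Equiv.symm_apply_apply]

lemma periodOp_mul_fnWordOp [DecidableEq ι]
    (hS : ∀ i i', star (S i) * S i' = if i = i' then 1 else 0)
    {a b : ℕ} (γ : (Fin a → ι) ≃ (Fin b → κ)) (u : Fin a → ι) :
    periodOp S T γ * fnWordOp S u = fnWordOp T (γ u) := by
  simp [periodOp, Finset.sum_mul, mul_assoc, star_fnWordOp_mul_fnWordOp hS]

lemma periodOp_mem_unitary [Fintype κ] [DecidableEq ι] [DecidableEq κ]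
    (hS : ∀ i i', star (S i) * S i' = if i = i' then 1 else 0)
    (hT : ∀ j j', star (T j) * T j' = if j = j' then 1 else 0)
    (hS' : ∑ i, S i * star (S i) = 1) (hT' : ∑ j, T j * star (T j) = 1)
    {a b : ℕ} (γ : (Fin a → ι) ≃ (Fin b → κ)) : periodOp S T γ ∈ unitary (E →L[ℂ] E) := by
  refine Unitary.mem_iff.2 ⟨eq_of_forall_mul_fnWordOp_eq hS' a fun u => ?_,
    eq_of_forall_mul_fnWordOp_eq hT' b fun v => ?_⟩
  · rw [mul_assoc, periodOp_mul_fnWordOp hS, star_periodOp, periodOp_mul_fnWordOp hT,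
      Equiv.symm_apply_apply, one_mul]
  · rw [mul_assoc, star_periodOp, periodOp_mul_fnWordOp hT, periodOp_mul_fnWordOp hS,
      Equiv.apply_symm_apply, one_mul]

lemma commute_periodOp [Nontrivial E] [DecidableEq ι] [DecidableEq κ]
    (hS : ∀ i i', star (S i) * S i' = if i = i' then 1 else 0)
    (hT : ∀ j j', star (T j) * T j' = if j = j' then 1 else 0)
    (hS' : ∑ i, S i * star (S i) = 1)
    (hmove : ∀ i j, ∃ j' i', S i * T j = T j' * S i')
    {a b : ℕ} {γ : (Fin (a + 1) → ι) ≃ (Fin b → κ)}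
    (hper : ∀ u v, fnWordOp S u * fnWordOp T v = fnWordOp T (γ u) * fnWordOp S (γ.symm v))
    (i : ι) : Commute (periodOp S T γ) (S i) := by
  refine eq_of_forall_mul_fnWordOp_eq hS' (a + 1) fun u => ?_
  rw [← Fin.snoc_init_self u]
  calc periodOp S T γ * S i * fnWordOp S (Fin.snoc (Fin.init u) (u (Fin.last a)))
      = periodOp S T γ * fnWordOp S (Fin.cons i (Fin.init u)) * S (u (Fin.last a)) := by
        rw [mul_assoc, ← fnWordOp_cons, Fin.cons_snoc_eq_snoc_cons, fnWordOp_snoc, mul_assoc]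
    _ = S i * fnWordOp T (γ (Fin.snoc (Fin.init u) (u (Fin.last a)))) := by
        rw [periodOp_mul_fnWordOp hS, mul_fnWordOp_snoc_eq_fnWordOp_cons_mul hS hT hmove hper]
    _ = S i * periodOp S T γ * fnWordOp S (Fin.snoc (Fin.init u) (u (Fin.last a))) := by
        rw [mul_assoc, periodOp_mul_fnWordOp hS]

end PeriodOp

lemma exists_continuous_mul_eq_zero {X : Type*} [MetricSpace X] {x y : X} (hxy : x ≠ y) :
    ∃ f g : X → ℂ, Continuous f ∧ Continuous g ∧ f * g = 0 ∧ f x ≠ 0 ∧ g y ≠ 0 := by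
  obtain ⟨r, hr, hxy⟩ : ∃ r : ℝ, 0 < r ∧ dist x y = 2 * r :=
    ⟨dist x y / 2, half_pos (dist_pos.2 hxy), by ring⟩
  refine ⟨fun z => ((max 0 (r - dist z x) : ℝ) : ℂ), fun z => ((max 0 (r - dist z y) : ℝ) : ℂ),
    by fun_prop, by fun_prop, funext fun z => ?_, by simp [hr], by simp [hr]⟩
  have : dist x y ≤ dist z x + dist z y := dist_triangle_left x y z
  rcases le_total (r - dist z x) 0 with h | h
  · simp [max_eq_left h]
  · simp [max_eq_left (show r - dist z y ≤ 0 by linarith)]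

section Schur

variable {E : Type*} [NormedAddCommGroup E] [InnerProductSpace ℂ E] {𝒮 : Set (E →L[ℂ] E)}
  (h𝒮 : ∀ M : Submodule ℂ E, IsClosed (M : Set E) → (∀ B ∈ 𝒮, ∀ x ∈ M, B x ∈ M) →
    M = ⊥ ∨ M = ⊤)
include h𝒮

lemma eq_zero_or_denseRange_of_forall_commute {C : E →L[ℂ] E} (hC : ∀ B ∈ 𝒮, Commute C B) :
    C = 0 ∨ DenseRange C := by
  set M := (LinearMap.range (C : E →ₗ[ℂ] E)).topologicalClosure
  have hinv : ∀ B ∈ 𝒮, ∀ x ∈ M, B x ∈ M := by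
    refine fun B hB x hx => map_mem_closure B.continuous hx ?_
    rintro _ ⟨y, rfl⟩
    exact ⟨B y, by simpa using congrArg (· y) (hC B hB).eq⟩
  rcases h𝒮 M (Submodule.isClosed_topologicalClosure _) hinv with h | h
  · left
    ext x
    have hx : C x ∈ M :=
      (LinearMap.range _).le_topologicalClosure (LinearMap.mem_range_self (C : E →ₗ[ℂ] E) x)
    simpa [h] using hx
  · right
    intro x
    have hx : x ∈ (M : Set E) := by rw [h]; trivial
    rwa [Submodule.topologicalClosure_coe, LinearMap.coe_range, ContinuousLinearMap.coe_coe]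
      at hx

theorem exists_eq_algebraMap_of_forall_commute [CompleteSpace E] [Nontrivial E] {A : E →L[ℂ] E}
    [IsStarNormal A]
    (hA : ∀ B ∈ 𝒮, Commute A B) (hA' : ∀ B ∈ 𝒮, Commute (star A) B) :
    ∃ c : ℂ, A = algebraMap ℂ (E →L[ℂ] E) c := by
  have hcfc : ∀ f : ℂ → ℂ, Continuous f → cfc f A = 0 → ∀ z ∈ spectrum ℂ A, f z = 0 :=
    fun f hf h z hz => by
      simpa using (eqOn_of_cfc_eq_cfc (h.trans (cfc_zero ℂ A).symm) hf.continuousOn) hz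
  -- Two spectral points would give `f g` with `f * g = 0`; then `cfc g A ≠ 0` has dense range,
  -- which forces `cfc f A = 0`.
  obtain ⟨x, hx⟩ := spectrum.nonempty A
  refine ⟨x, CFC.eq_algebraMap_of_spectrum_subset_singleton A x fun y hy => ?_⟩
  by_contra hyx
  obtain ⟨f, g, hf, hg, hfg, hfy, hgx⟩ := exists_continuous_mul_eq_zero hyx
  have hdense : DenseRange (cfc g A : E →L[ℂ] E) :=
    (eq_zero_or_denseRange_of_forall_commute h𝒮 fun B hB =>
      (hA B hB).cfc (hA' B hB) g).resolve_left fun h => hgx (hcfc g hg h x hx)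
  have hprod : cfc f A * cfc g A = 0 := by
    rw [← cfc_mul f g A, show (fun z => f z * g z) = 0 from hfg, cfc_zero]
  have hf0 : cfc f A = 0 := by
    ext z
    exact congrFun (hdense.equalizer (cfc f A).continuous continuous_const
      (funext fun w => congrArg (· w) hprod)) z
  exact hfy (hcfc f hf hf0 y hy)

end Schur

lemma Commute.star_left_of_mem_unitary {R : Type*} [Monoid R] [StarMul R] {u x : R}
    (hu : u ∈ unitary R) (h : Commute u x) : Commute (star u) x :=
  (commute_unitary_iff_star_left_conjugate (Unitary.star_mem hu)).2 <| by
    rw [_root_.star_star]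
    exact (commute_unitary_iff_star_right_conjugate hu).1 h

namespace TwoGraphRep

variable {m n : ℕ} {θ : Equiv.Perm (Fin m × Fin n)} {H : Type*}
  [NormedAddCommGroup H] [InnerProductSpace ℂ H] [CompleteSpace H] (ρ : TwoGraphRep m n θ H)

lemma exists_S_mul_T_eq (i : Fin m) (j : Fin n) : ∃ j' i', ρ.S i * ρ.T j = ρ.T j' * ρ.S i' :=
  ⟨_, _, ρ.comm i j⟩

lemma exists_T_mul_S_eq (j : Fin n) (i : Fin m) : ∃ i' j', ρ.T j * ρ.S i = ρ.S i' * ρ.T j' := by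
  obtain ⟨p, hp⟩ := θ.surjective (i, j)
  refine ⟨p.1, p.2, ?_⟩
  rw [ρ.comm, Prod.mk.eta, hp]

variable {ρ}

lemma Irreducible.exists_eq_algebraMap [Nontrivial H] (hirr : ρ.Irreducible)
    {U : H →L[ℂ] H} (hU : U ∈ unitary (H →L[ℂ] H))
    (hS : ∀ i, Commute U (ρ.S i)) (hT : ∀ j, Commute U (ρ.T j)) :
    ∃ c : ℂ, U = algebraMap ℂ (H →L[ℂ] H) c := by
  have := isStarNormal_of_mem_unitary hU
  have hS' i := (hS i).star_left_of_mem_unitary hU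
  have hT' j := (hT j).star_left_of_mem_unitary hU
  refine exists_eq_algebraMap_of_forall_commute (𝒮 := {B | (∃ i, B = ρ.S i ∨ B = star (ρ.S i)) ∨
    ∃ j, B = ρ.T j ∨ B = star (ρ.T j)}) ?_ ?_ ?_
  · intro M hM hinv
    exact hirr M hM (fun i => hinv _ (.inl ⟨i, .inl rfl⟩)) (fun i => hinv _ (.inl ⟨i, .inr rfl⟩))
      (fun j => hinv _ (.inr ⟨j, .inl rfl⟩)) (fun j => hinv _ (.inr ⟨j, .inr rfl⟩))
  · rintro _ (⟨i, rfl | rfl⟩ | ⟨j, rfl | rfl⟩)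
    exacts [hS i, by simpa using (hS' i).star_star, hT j, by simpa using (hT' j).star_star]
  · rintro _ (⟨i, rfl | rfl⟩ | ⟨j, rfl | rfl⟩)
    exacts [hS' i, by simpa using (hS i).star_star, hT' j, by simpa using (hT j).star_star]

lemma IsWanderingRep.nontrivial {ζ : H} (hζ : ρ.IsWanderingRep ζ) : Nontrivial H :=
  nontrivial_of_ne ζ 0 fun h => by simpa [h] using hζ.1

lemma IsWanderingRep.fnWordOp_T_ne_smul {ζ : H} (hζ : ρ.IsWanderingRep ζ) {k l : ℕ} (hk : 0 < k)
    (u : Fin k → Fin m) (v : Fin l → Fin n) (c : ℂ) :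
    fnWordOp ρ.T v ≠ c • fnWordOp ρ.S u := by
  intro h
  have huu : ⟪fnWordOp ρ.S u ζ, fnWordOp ρ.S u ζ⟫ = 1 := by
    simpa [fnWordOp, wordOp] using hζ.2 (List.ofFn u) (List.ofFn u) [] []
  have huv : ⟪fnWordOp ρ.S u ζ, fnWordOp ρ.T v ζ⟫ = 0 := by
    simpa [fnWordOp, wordOp, hk.ne'] using hζ.2 (List.ofFn u) [] [] (List.ofFn v)
  have hvv : ⟪fnWordOp ρ.T v ζ, fnWordOp ρ.T v ζ⟫ = 1 := by
    simpa [fnWordOp, wordOp] using hζ.2 [] [] (List.ofFn v) (List.ofFn v)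
  rw [h, smul_apply, inner_smul_right, huu, mul_one] at huv
  simp [h, huv] at hvv

end TwoGraphRep

theorem statement4_general {m n : ℕ} (hm : 2 ≤ m)
    {θ : Equiv.Perm (Fin m × Fin n)} {H : Type*}
    [NormedAddCommGroup H] [InnerProductSpace ℂ H] [CompleteSpace H]
    (ρ : TwoGraphRep m n θ H) (hCuntz : ρ.CuntzType) (hirr : ρ.Irreducible)
    (a b : ℕ) (ha : 0 < a) (hb : 0 < b)
    (γ : (Fin a → Fin m) ≃ (Fin b → Fin n))
    (hper : ∀ (u : Fin a → Fin m) (v : Fin b → Fin n),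
      fnWordOp ρ.S u * fnWordOp ρ.T v = fnWordOp ρ.T (γ u) * fnWordOp ρ.S (γ.symm v)) :
    ¬ ∃ ζ : H, ρ.IsWanderingRep ζ := by
  rintro ⟨ζ, hζ⟩
  have := hζ.nontrivial
  obtain ⟨a, rfl⟩ : ∃ a', a = a' + 1 := ⟨a - 1, by omega⟩
  obtain ⟨b, rfl⟩ : ∃ b', b = b' + 1 := ⟨b - 1, by omega⟩
  have hper' : ∀ v u, fnWordOp ρ.T v * fnWordOp ρ.S u =
      fnWordOp ρ.S (γ.symm v) * fnWordOp ρ.T (γ.symm.symm u) := fun v u => by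
    simpa using (hper (γ.symm v) (γ u)).symm
  set W := periodOp ρ.S ρ.T γ
  have hW : W ∈ unitary (H →L[ℂ] H) :=
    periodOp_mem_unitary ρ.isometS ρ.isometT hCuntz.1 hCuntz.2 γ
  have hWS : ∀ i, Commute W (ρ.S i) :=
    commute_periodOp ρ.isometS ρ.isometT hCuntz.1 ρ.exists_S_mul_T_eq hper
  have hWT : ∀ j, Commute W (ρ.T j) := fun j => by
    have h := commute_periodOp ρ.isometT ρ.isometS hCuntz.2 ρ.exists_T_mul_S_eq hper' j
    rw [← star_periodOp] at h
    simpa using h.star_left_of_mem_unitary (Unitary.star_mem hW)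
  obtain ⟨c, hc⟩ := hirr.exists_eq_algebraMap hW hWS hWT
  let u₀ : Fin (a + 1) → Fin m := fun _ => ⟨0, by omega⟩
  have hWu₀ : W * fnWordOp ρ.S u₀ = fnWordOp ρ.T (γ u₀) := periodOp_mul_fnWordOp ρ.isometS γ u₀
  refine hζ.fnWordOp_T_ne_smul a.succ_pos u₀ (γ u₀) c ?_
  rw [← hWu₀, hc, Algebra.algebraMap_eq_smul_one, smul_mul_assoc, one_mul]

/-- Irreducible atomic representations of type 1 or 3b(ii) of a periodic 2-graph have no
wandering vectors. -/
theorem statement4 {m n : ℕ} (hm : 2 ≤ m) (hn : 2 ≤ n)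
    {θ : Equiv.Perm (Fin m × Fin n)} {H : Type*}
    [NormedAddCommGroup H] [InnerProductSpace ℂ H] [CompleteSpace H]
    (ρ : TwoGraphRep m n θ H) (hCuntz : ρ.CuntzType) (hirr : ρ.Irreducible)
    {Λ : Type*} (ξ : HilbertBasis Λ ℂ H) (hAtomic : ρ.AtomicBasis ξ)
    (a b : ℕ) (ha : 0 < a) (hb : 0 < b)
    (γ : (Fin a → Fin m) ≃ (Fin b → Fin n))
    (hper : ∀ (u : Fin a → Fin m) (v : Fin b → Fin n),
      fnWordOp ρ.S u * fnWordOp ρ.T v = fnWordOp ρ.T (γ u) * fnWordOp ρ.S (γ.symm v))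
    (hcase :
      ((∃ t, ρ.HasBlueRing (ξ t)) ∧ (∃ t, ρ.HasRedRing (ξ t))) ∨
      ((∀ t, ¬ ρ.HasBlueRing (ξ t) ∧ ¬ ρ.HasRedRing (ξ t) ∧ ¬ ρ.HasMixedRing (ξ t)) ∧
        ∃ (k l : ℕ) (_ : 0 < k) (_ : 0 < l) (t0 : Λ)
          (u : ℕ → (Fin k → Fin m)) (v : ℕ → (Fin l → Fin n)),
          (∀ e : ℕ, fnWordOp ρ.T (v e) * fnWordOp ρ.S (u (e + 1)) =
              fnWordOp ρ.S (u e) * fnWordOp ρ.T (v (e + 1))) ∧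
          (∀ t : ℕ,
            (star (((List.range (t + 1)).map (fun e => fnWordOp ρ.T (v e))).prod)) (ξ t0) ≠ 0 ∧
            ∃ c : ℂ, ‖c‖ = 1 ∧
              (star (((List.range (t + 1)).map (fun e => fnWordOp ρ.T (v e))).prod)) (ξ t0) =
                c • (star (((List.range (t + 1)).map (fun e => fnWordOp ρ.S (u e))).prod))
                  (ξ t0)))) :
    ¬ ∃ ζ : H, ρ.IsWanderingRep ζ :=
  statement4_general hm ρ hCuntz hirr a b ha hb γ hper
end
end

section
/- Let (S,T) be a Cuntz-type representation of F_θ^+ on H (m ≥ 2 or n ≥ 2). For k,l > 0 let V = P_{k,l}H be the range of the structure projection of the row-isometry [S_uT_v : |u|=k, |v|=l], i.e. the orthogonal complement of the closed linear span of its wandering vectors. Then V is invariant under S_i* for every i and under T_j* for every j. Consequently, the range PH of the first structure projection P = ⋀_{k,l>0} P_{k,l} is invariant under A* for every A in the nonself-adjoint 2-graph algebra 𝔖. -/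
noncomputable section

open scoped InnerProductSpace ComplexInnerProductSpace Classical

/-! Proof idea: a unit vector `ζ` is wandering for `[S_u T_v : |u| = k, |v| = l]` exactly when
it is orthogonal to `S_u T_v ζ` for all `|u| = qk`, `|v| = ql`, `q > 0`; the commutation relations
move a letter `S_i` or `T_j` applied to `ζ` to the front, where it cancels against `S_i*` or `T_j*`.
So the wandering vectors are mapped to wandering vectors by every `S_i` and `T_j`, their closed span
is invariant under the generators, and its orthogonal complement is invariant under the adjoint of
every element of the WOT-closed algebra they generate. -/

open Submodule

theorem exists_mul_prod_map_eq {M α β : Type*} [Monoid M] (f : α → M) (g : β → M)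
    (h : ∀ a b, ∃ b' a', f a * g b = g b' * f a') (a : α) (v : List β) :
    ∃ (v' : List β) (a' : α), v'.length = v.length ∧
      f a * (v.map g).prod = (v'.map g).prod * f a' := by
  induction v generalizing a with
  | nil => exact ⟨[], a, rfl, by simp⟩
  | cons b v ih =>
    obtain ⟨b', a₁, hab⟩ := h a b
    obtain ⟨v', a', hlen, hv⟩ := ih a₁
    refine ⟨b' :: v', a', by simp [hlen], ?_⟩
    rw [List.map_cons, List.prod_cons, ← mul_assoc, hab, mul_assoc, hv, List.map_cons,
      List.prod_cons, mul_assoc]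

theorem exists_prod_map_mul_prod_map_eq {M α β : Type*} [Monoid M] (f : α → M) (g : β → M)
    (h : ∀ a b, ∃ b' a', f a * g b = g b' * f a') (u : List α) (v : List β) :
    ∃ (v' : List β) (u' : List α), v'.length = v.length ∧ u'.length = u.length ∧
      (u.map f).prod * (v.map g).prod = (v'.map g).prod * (u'.map f).prod := by
  induction u generalizing v with
  | nil => exact ⟨v, [], rfl, rfl, by simp⟩
  | cons a u ih =>
    obtain ⟨v₁, u', hv₁, hu', hu⟩ := ih v
    obtain ⟨v', a', hv', ha⟩ := exists_mul_prod_map_eq f g h a v₁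
    refine ⟨v', a' :: u', hv'.trans hv₁, by simp [hu'], ?_⟩
    rw [List.map_cons, List.prod_cons, mul_assoc, hu, ← mul_assoc, ha, mul_assoc,
      List.map_cons, List.prod_cons]

theorem apply_mem_topologicalClosure_span {R M : Type*} [Semiring R] [TopologicalSpace M]
    [AddCommMonoid M] [Module R M] [ContinuousAdd M] [ContinuousConstSMul R M]
    {s : Set M} (A : M →L[R] M) (hs : ∀ x ∈ s, A x ∈ s) {x : M}
    (hx : x ∈ (span R s).topologicalClosure) : A x ∈ (span R s).topologicalClosure := by
  have hspan : span R s ≤ (span R s).comap (A : M →ₗ[R] M) :=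
    span_le.2 fun y hy => subset_span (hs y hy)
  rw [← SetLike.mem_coe, topologicalClosure_coe] at hx ⊢
  exact map_mem_closure A.continuous hx fun y hy => hspan hy

section Operators

variable {E : Type*} [NormedAddCommGroup E] [InnerProductSpace ℂ E]

theorem wordOp_nil {ι : Type*} (V : ι → E →L[ℂ] E) : wordOp V [] = 1 := rfl

theorem wordOp_cons {ι : Type*} (V : ι → E →L[ℂ] E) (a : ι) (w : List ι) :
    wordOp V (a :: w) = V a * wordOp V w := by
  simp [wordOp]

theorem wordOp_singleton {ι : Type*} (V : ι → E →L[ℂ] E) (a : ι) : wordOp V [a] = V a := by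
  simp [wordOp]

theorem wordOp_append {ι : Type*} (V : ι → E →L[ℂ] E) (w w' : List ι) :
    wordOp V (w ++ w') = wordOp V w * wordOp V w' := by
  simp [wordOp]

theorem subset_wotClosure (S : Set (E →L[ℂ] E)) : S ⊆ wotClosure S :=
  fun A hA _ hε _ => ⟨A, hA, fun _ _ => by simpa using hε⟩

theorem subset_genWotAlg (G : Set (E →L[ℂ] E)) : G ⊆ genWotAlg G :=
  (Algebra.subset_adjoin).trans (subset_wotClosure _)

theorem inner_eq_zero_of_mem_wotClosure {S : Set (E →L[ℂ] E)} {x y : E}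
    (hS : ∀ B ∈ S, ⟪x, B y⟫ = 0) {A : E →L[ℂ] E} (hA : A ∈ wotClosure S) : ⟪x, A y⟫ = 0 := by
  by_contra hne
  obtain ⟨B, hB, hAB⟩ := hA ‖⟪x, A y⟫‖ (norm_pos_iff.2 hne) {(x, y)}
  have := hAB (x, y) (Finset.mem_singleton_self _)
  simp [hS B hB] at this

theorem apply_mem_of_mem_adjoin {G : Set (E →L[ℂ] E)} {K : Submodule ℂ E}
    (hG : ∀ g ∈ G, ∀ x ∈ K, g x ∈ K) {B : E →L[ℂ] E} (hB : B ∈ Algebra.adjoin ℂ G) :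
    ∀ x ∈ K, B x ∈ K := by
  induction hB using Algebra.adjoin_induction with
  | mem g hg => exact hG g hg
  | algebraMap c =>
    exact fun x hx => by simpa [Algebra.algebraMap_eq_smul_one] using K.smul_mem c hx
  | add B C _ _ hB hC => exact fun x hx => K.add_mem (hB x hx) (hC x hx)
  | mul B C _ _ hB hC => exact fun x hx => hB _ (hC x hx)

theorem star_apply_mem_orthogonal_of_mem_genWotAlg [CompleteSpace E] {G : Set (E →L[ℂ] E)}
    {K : Submodule ℂ E} (hG : ∀ g ∈ G, ∀ x ∈ K, g x ∈ K) {A : E →L[ℂ] E}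
    (hA : A ∈ genWotAlg G) {x : E} (hx : x ∈ Kᗮ) : star A x ∈ Kᗮ := by
  refine (mem_orthogonal _ _).2 fun w hw => ?_
  have hAw : ⟪x, A w⟫ = 0 := inner_eq_zero_of_mem_wotClosure
    (fun B hB => inner_left_of_mem_orthogonal (apply_mem_of_mem_adjoin hG hB w hw) hx) hA
  rw [ContinuousLinearMap.star_eq_adjoint, ContinuousLinearMap.adjoint_inner_right,
    ← inner_conj_symm, hAw, map_zero]

variable [CompleteSpace E] {ι : Type*} [DecidableEq ι] {V : ι → E →L[ℂ] E}

theorem inner_apply_apply_of_isometries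
    (hV : ∀ a a', star (V a) * V a' = if a = a' then 1 else 0) (a a' : ι) (x y : E) :
    ⟪V a x, V a' y⟫ = if a = a' then ⟪x, y⟫ else 0 := by
  rw [← ContinuousLinearMap.adjoint_inner_right, ← ContinuousLinearMap.star_eq_adjoint,
    ← mul_apply_eq_comp, hV]
  split_ifs <;> simp

theorem norm_apply_of_isometries
    (hV : ∀ a a', star (V a) * V a' = if a = a' then 1 else 0) (a : ι) (x : E) :
    ‖V a x‖ = ‖x‖ :=
  (ContinuousLinearMap.norm_map_iff_adjoint_comp_self (V a)).2
    (by simpa [ContinuousLinearMap.star_eq_adjoint, ContinuousLinearMap.mul_def] using hV a a) x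

theorem inner_wordOp_wordOp_of_length_eq
    (hV : ∀ a a', star (V a) * V a' = if a = a' then 1 else 0) {w w' : List ι}
    (hw : w.length = w'.length) (x y : E) :
    ⟪wordOp V w x, wordOp V w' y⟫ = if w = w' then ⟪x, y⟫ else 0 := by
  induction w generalizing w' with
  | nil => simp [List.length_eq_zero_iff.1 hw.symm, wordOp_nil]
  | cons a t ih =>
    obtain ⟨b, t', rfl⟩ := List.exists_cons_of_length_eq_add_one hw.symm
    rw [wordOp_cons, wordOp_cons, mul_apply_eq_comp, mul_apply_eq_comp,
      inner_apply_apply_of_isometries hV, ih (by simpa using hw)]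
    by_cases hab : a = b <;> by_cases htt : t = t' <;> simp [hab, htt]

end Operators

namespace TwoGraphRep

variable {m n : ℕ} {θ : Equiv.Perm (Fin m × Fin n)} {H : Type*}
  [NormedAddCommGroup H] [InnerProductSpace ℂ H] [CompleteSpace H] (ρ : TwoGraphRep m n θ H)

theorem exists_wordOp_S_mul_wordOp_T (u : List (Fin m)) (v : List (Fin n)) :
    ∃ (v' : List (Fin n)) (u' : List (Fin m)), v'.length = v.length ∧ u'.length = u.length ∧
      wordOp ρ.S u * wordOp ρ.T v = wordOp ρ.T v' * wordOp ρ.S u' :=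
  exists_prod_map_mul_prod_map_eq ρ.S ρ.T
    (fun i j => ⟨(θ (i, j)).2, (θ (i, j)).1, ρ.comm i j⟩) u v

theorem exists_wordOp_T_mul_wordOp_S (v : List (Fin n)) (u : List (Fin m)) :
    ∃ (u' : List (Fin m)) (v' : List (Fin n)), u'.length = u.length ∧ v'.length = v.length ∧
      wordOp ρ.T v * wordOp ρ.S u = wordOp ρ.S u' * wordOp ρ.T v' :=
  exists_prod_map_mul_prod_map_eq ρ.T ρ.S
    (fun j i => ⟨(θ.symm (i, j)).1, (θ.symm (i, j)).2, by
      simpa using (ρ.comm (θ.symm (i, j)).1 (θ.symm (i, j)).2).symm⟩) v u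

variable {ρ} {k l : ℕ} {ζ : H}

theorem inner_wordOp_mul_wordOp_of_le (hk : 0 < k)
    (hζ : ∀ q, 0 < q → ∀ (u : List (Fin m)) (v : List (Fin n)),
      u.length = q * k → v.length = q * l → ⟪ζ, (wordOp ρ.S u * wordOp ρ.T v) ζ⟫ = 0)
    {p p' : ℕ} (hpp' : p ≤ p') {u u' : List (Fin m)} {v v' : List (Fin n)}
    (hu : u.length = p * k) (hv : v.length = p * l)
    (hu' : u'.length = p' * k) (hv' : v'.length = p' * l) :
    ⟪(wordOp ρ.S u * wordOp ρ.T v) ζ, (wordOp ρ.S u' * wordOp ρ.T v') ζ⟫ =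
      if u = u' ∧ v = v' then ⟪ζ, ζ⟫ else 0 := by
  obtain ⟨q, rfl⟩ := Nat.exists_eq_add_of_le hpp'
  rcases q.eq_zero_or_pos with rfl | hq
  · simp only [mul_apply_eq_comp]
    rw [inner_wordOp_wordOp_of_length_eq ρ.isometS (by rw [hu, hu', add_zero]),
      inner_wordOp_wordOp_of_length_eq ρ.isometT (by rw [hv, hv', add_zero])]
    by_cases huu : u = u' <;> by_cases hvv : v = v' <;> simp [huu, hvv]
  have huu' : u ≠ u' := fun h => by subst h; nlinarith
  obtain ⟨u₁, u₂, rfl, hu₁⟩ : ∃ u₁ u₂, u' = u₁ ++ u₂ ∧ u₁.length = u.length :=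
    ⟨_, _, (List.take_append_drop u.length u').symm, by simp [hu, hu']⟩
  obtain ⟨v₁, v₂, rfl, hv₁⟩ : ∃ v₁ v₂, v' = v₁ ++ v₂ ∧ v₁.length = v.length :=
    ⟨_, _, (List.take_append_drop v.length v').symm, by simp [hv, hv']⟩
  obtain ⟨y, z, hy, hz, hyz⟩ := ρ.exists_wordOp_S_mul_wordOp_T u₂ v₁
  have hsplit : wordOp ρ.S (u₁ ++ u₂) * wordOp ρ.T (v₁ ++ v₂) =
      wordOp ρ.S u₁ * (wordOp ρ.T y * (wordOp ρ.S z * wordOp ρ.T v₂)) := by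
    rw [wordOp_append, wordOp_append, mul_assoc, ← mul_assoc (wordOp ρ.S u₂), hyz]
    simp only [mul_assoc]
  have hzero : ⟪ζ, (wordOp ρ.S z * wordOp ρ.T v₂) ζ⟫ = 0 := hζ q hq z v₂
    (by rw [hz]; simpa [hu₁, hu, add_mul] using hu') (by simpa [hv₁, hv, add_mul] using hv')
  rw [hsplit, if_neg (fun h => huu' h.1)]
  simp only [mul_apply_eq_comp] at hzero ⊢
  rw [inner_wordOp_wordOp_of_length_eq ρ.isometS hu₁.symm,
    inner_wordOp_wordOp_of_length_eq ρ.isometT (by rw [hy, hv₁]), hzero]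
  simp

theorem isWanderingKL_iff (hk : 0 < k) :
    ρ.IsWanderingKL k l ζ ↔ ‖ζ‖ = 1 ∧ ∀ q, 0 < q → ∀ (u : List (Fin m)) (v : List (Fin n)),
      u.length = q * k → v.length = q * l → ⟪ζ, (wordOp ρ.S u * wordOp ρ.T v) ζ⟫ = 0 := by
  refine ⟨fun hζ => ⟨hζ.1, fun q hq u v hu hv => ?_⟩, fun hζ => ⟨hζ.1, ?_⟩⟩
  · have hune : [] ≠ u := fun h => by subst h; simp at hu; omega
    simpa [wordOp_nil, hune] using hζ.2 0 q [] u [] v (by simp) (by simp) hu hv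
  · have hζζ : ⟪ζ, ζ⟫ = 1 := by simp [inner_self_eq_norm_sq_to_K, hζ.1]
    intro p p' u u' v v' hu hv hu' hv'
    rcases le_total p p' with hpp' | hp'p
    · rw [inner_wordOp_mul_wordOp_of_le hk hζ.2 hpp' hu hv hu' hv', hζζ]
    · rw [← inner_conj_symm, inner_wordOp_mul_wordOp_of_le hk hζ.2 hp'p hu' hv' hu hv, hζζ]
      by_cases huu : u = u' <;> by_cases hvv : v = v' <;> simp [huu, hvv, eq_comm]

theorem IsWanderingKL.apply_S (hk : 0 < k) (hζ : ρ.IsWanderingKL k l ζ) (i : Fin m) :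
    ρ.IsWanderingKL k l (ρ.S i ζ) := by
  rw [isWanderingKL_iff hk] at hζ ⊢
  refine ⟨(norm_apply_of_isometries ρ.isometS i ζ).trans hζ.1, fun q hq u v hu hv => ?_⟩
  obtain ⟨u₀, u', rfl⟩ := List.exists_cons_of_ne_nil (List.ne_nil_of_length_pos
    (by rw [hu]; exact Nat.mul_pos hq hk))
  obtain ⟨a, x, ha, hx, hax⟩ := ρ.exists_wordOp_T_mul_wordOp_S v [i]
  have hmove : wordOp ρ.S (u₀ :: u') * wordOp ρ.T v * ρ.S i =
      ρ.S u₀ * (wordOp ρ.S (u' ++ a) * wordOp ρ.T x) := by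
    rw [mul_assoc, ← wordOp_singleton ρ.S i, hax, wordOp_cons, wordOp_append]
    simp only [mul_assoc]
  rw [← mul_apply_eq_comp _ (ρ.S i), hmove, mul_apply_eq_comp,
    inner_apply_apply_of_isometries ρ.isometS]
  split_ifs
  · exact hζ.2 q hq _ _ (by simpa [ha] using hu) (hx.trans hv)
  · rfl

theorem IsWanderingKL.apply_T (hk : 0 < k) (hζ : ρ.IsWanderingKL k l ζ) (j : Fin n) :
    ρ.IsWanderingKL k l (ρ.T j ζ) := by
  rw [isWanderingKL_iff hk] at hζ ⊢
  refine ⟨(norm_apply_of_isometries ρ.isometT j ζ).trans hζ.1, fun q hq u v hu hv => ?_⟩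
  obtain ⟨y, z, hy, hz, hyz⟩ := ρ.exists_wordOp_S_mul_wordOp_T u (v ++ [j])
  obtain ⟨y₀, y', rfl⟩ := List.exists_cons_of_ne_nil (List.ne_nil_of_length_pos
    (by rw [hy]; simp))
  obtain ⟨z', y'', hz', hy'', hzy⟩ := ρ.exists_wordOp_T_mul_wordOp_S y' z
  have hmove : wordOp ρ.S u * wordOp ρ.T v * ρ.T j =
      ρ.T y₀ * (wordOp ρ.S z' * wordOp ρ.T y'') := by
    rw [mul_assoc, ← wordOp_singleton ρ.T j, ← wordOp_append, hyz, wordOp_cons, mul_assoc, hzy]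
  rw [← mul_apply_eq_comp _ (ρ.T j), hmove, mul_apply_eq_comp,
    inner_apply_apply_of_isometries ρ.isometT]
  split_ifs
  · exact hζ.2 q hq _ _ (hz'.trans (hz.trans hu)) (by simpa [hy'', hv] using hy)
  · rfl

theorem apply_mem_wanderingSpan (hk : 0 < k) {g : H →L[ℂ] H}
    (hg : g ∈ Set.range ρ.S ∪ Set.range ρ.T) {x : H}
    (hx : x ∈ (span ℂ {ζ : H | ρ.IsWanderingKL k l ζ}).topologicalClosure) :
    g x ∈ (span ℂ {ζ : H | ρ.IsWanderingKL k l ζ}).topologicalClosure := by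
  refine apply_mem_topologicalClosure_span g (fun ζ hζ => ?_) hx
  rcases hg with ⟨i, rfl⟩ | ⟨j, rfl⟩
  exacts [hζ.apply_S hk i, hζ.apply_T hk j]

theorem star_apply_mem_structSpaceKL (hk : 0 < k) {A : H →L[ℂ] H} (hA : A ∈ ρ.alg) {x : H}
    (hx : x ∈ ρ.structSpaceKL k l) : star A x ∈ ρ.structSpaceKL k l :=
  star_apply_mem_orthogonal_of_mem_genWotAlg (fun _ hg _ hy => apply_mem_wanderingSpan hk hg hy)
    hA hx

end TwoGraphRep

theorem statement6_general {m n : ℕ}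
    {θ : Equiv.Perm (Fin m × Fin n)} {H : Type*}
    [NormedAddCommGroup H] [InnerProductSpace ℂ H] [CompleteSpace H]
    (ρ : TwoGraphRep m n θ H) :
    (∀ k l : ℕ, 0 < k → 0 < l →
      (∀ i, ∀ x ∈ ρ.structSpaceKL k l, star (ρ.S i) x ∈ ρ.structSpaceKL k l) ∧
      (∀ j, ∀ x ∈ ρ.structSpaceKL k l, star (ρ.T j) x ∈ ρ.structSpaceKL k l)) ∧
    (∀ A ∈ ρ.alg, ∀ x ∈ ρ.firstStructSpace, star A x ∈ ρ.firstStructSpace) := by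
  refine ⟨fun k l hk _ => ⟨fun i x hx => ?_, fun j x hx => ?_⟩, fun A hA x hx => ?_⟩
  · exact ρ.star_apply_mem_structSpaceKL hk (subset_genWotAlg _ (Or.inl ⟨i, rfl⟩)) hx
  · exact ρ.star_apply_mem_structSpaceKL hk (subset_genWotAlg _ (Or.inr ⟨j, rfl⟩)) hx
  · simp only [TwoGraphRep.firstStructSpace, mem_iInf] at hx ⊢
    exact fun k l hk hl => ρ.star_apply_mem_structSpaceKL hk hA (hx k l hk hl)

/-- The range of each structure projection `P_{k,l}` (k,l>0) is invariant under all `S_i*` and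
`T_j*`; consequently the range of the first structure projection is invariant under `A*` for
every `A ∈ 𝔖`. -/
theorem statement6 {m n : ℕ} (hm : 0 < m) (hn : 0 < n) (hmn : 2 ≤ m ∨ 2 ≤ n)
    {θ : Equiv.Perm (Fin m × Fin n)} {H : Type*}
    [NormedAddCommGroup H] [InnerProductSpace ℂ H] [CompleteSpace H]
    (ρ : TwoGraphRep m n θ H) (hCuntz : ρ.CuntzType) :
    (∀ k l : ℕ, 0 < k → 0 < l →
      (∀ i, ∀ x ∈ ρ.structSpaceKL k l, star (ρ.S i) x ∈ ρ.structSpaceKL k l) ∧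
      (∀ j, ∀ x ∈ ρ.structSpaceKL k l, star (ρ.T j) x ∈ ρ.structSpaceKL k l)) ∧
    (∀ A ∈ ρ.alg, ∀ x ∈ ρ.firstStructSpace, star A x ∈ ρ.firstStructSpace) :=
  statement6_general ρ
end
end
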